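/- arXiv:2510.12131 — 8 statements merged into one kernel-verified Lean document; each statement's English description precedes it below -/
import Mathlib

section
/- Let ℓ be a list of elements of type τ with length n - b, where b ≤ f. Let ℓ' be obtained from ℓ by: (1) appending b arbitrary elements of τ, (2) permuting the result, and (3) truncating to a prefix of length at least n - f. Then for any v : τ (with decidable equality), the count of v in ℓ' satisfies count v ℓ - f ≤ count v ℓ' ≤ count v ℓ + b. -/
theorem netwk_count_bound {τ : Type*} [DecidableEq τ] (n b f : ℕ) (hbf : b ≤ f)
    (ℓ a p ℓ' : List τ) (hlen : ℓ.length = n - b) (ha : a.length = b)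
    (hp : (ℓ ++ a).Perm p) (hpre : ℓ' <+: p) (hlen' : n - f ≤ ℓ'.length) (v : τ) :
    ℓ.count v - f ≤ ℓ'.count v ∧ ℓ'.count v ≤ ℓ.count v + b := by
  obtain ⟨rest, hrest⟩ := hpre
  have hcount : ℓ.count v + a.count v = ℓ'.count v + rest.count v := by
    rw [← List.count_append, hp.count_eq, ← hrest, List.count_append]
  have hlenp : ℓ.length + a.length = ℓ'.length + rest.length := by
    rw [← List.length_append, hp.length_eq, ← hrest, List.length_append]
  have h1 : a.count v ≤ a.length := List.count_le_length
  have h2 : rest.count v ≤ rest.length := List.count_le_length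
  omega
end

section
/- (Bosco one-step via network) Suppose n > 7f and b ≤ f. Let ℓ be a list of booleans of length n - b all equal to B, and let ℓ' ∈ Netwk(ℓ) (append ≤ b arbitrary booleans, permute, truncate to length ≥ n - f). Let (ct, cf) = foldl fcntb (0,0) ℓ'. Then the value with the larger count (ties going to true) equals B, and its count c satisfies 2*c > n + 3*f. -/
def fcntb : (ℕ × ℕ) → Bool → (ℕ × ℕ) :=
  fun (c : ℕ × ℕ) v => if v then (c.1 + 1, c.2) else (c.1, c.2 + 1)

/-- `Netwk n f b ℓ ℓ'` : `ℓ'` is obtained from `ℓ` by appending at most `b`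
arbitrary values, permuting, and taking a prefix of length at least `n - f`. -/
def Netwk {τ : Type*} (n f b : ℕ) (ℓ ℓ' : List τ) : Prop :=
  ∃ a : List τ, a.length ≤ b ∧ ∃ p : List τ,
    (ℓ ++ a).Perm p ∧ ℓ' <+: p ∧ n - f ≤ ℓ'.length

/-- majority value of a count pair: true iff the count of true is at least the count of false -/
def majVal (c : ℕ × ℕ) : Bool := decide (c.2 ≤ c.1)

lemma fold_fcntb (ℓ : List Bool) (c : ℕ × ℕ) :
    ℓ.foldl fcntb c = (c.1 + ℓ.count true, c.2 + ℓ.count false) := by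
  induction ℓ generalizing c with
  | nil => simp
  | cons h t ih =>
    cases h <;> simp [fcntb, ih, List.count_cons] <;> omega

lemma count_tf (ℓ : List Bool) : ℓ.count true + ℓ.count false = ℓ.length := by
  induction ℓ with
  | nil => simp
  | cons h t ih => cases h <;> simp [List.count_cons] <;> omega

theorem bosco_one_step_netwk (n f b : ℕ) (B : Bool) (ℓ ℓ' : List Bool)
    (hn : n > 7 * f) (hb : b ≤ f)
    (hlen : ℓ.length = n - b) (hall : ∀ x ∈ ℓ, x = B)
    (hnet : Netwk n f b ℓ ℓ') :
    majVal (ℓ'.foldl fcntb (0, 0)) = B ∧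
      2 * max (ℓ'.foldl fcntb (0, 0)).1 (ℓ'.foldl fcntb (0, 0)).2 > n + 3 * f := by
  obtain ⟨a, ha, p, hperm, hpref, hlen'⟩ := hnet
  have hcount : ∀ x, ℓ'.count x ≤ ℓ.count x + a.length := by
    intro x
    calc ℓ'.count x ≤ p.count x := hpref.sublist.count_le x
    _ = (ℓ ++ a).count x := (hperm.count_eq x).symm
    _ = ℓ.count x + a.count x := by simp
    _ ≤ ℓ.count x + a.length := by have : a.count x ≤ a.length := List.count_le_length; omega
  have hnotB : ℓ.count (!B) = 0 := by
    rw [List.count_eq_zero]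
    intro h
    have := hall _ h
    simp at this
  have hle : ℓ'.count (!B) ≤ b := by
    have := hcount (!B); omega
  have hsum := count_tf ℓ'
  rw [fold_fcntb]
  simp only [Nat.zero_add]
  cases B with
  | false =>
    have hle' : ℓ'.count true ≤ b := by simpa using hle
    refine ⟨?_, ?_⟩
    · simp only [majVal, decide_eq_false_iff_not, not_le]
      omega
    · omega
  | true =>
    have hle' : ℓ'.count false ≤ b := by simpa using hle
    refine ⟨?_, ?_⟩
    · simp only [majVal, decide_eq_true_eq]
      omega
    · omega
end

section
/- (Bosco decision implies univalence) Suppose n > 3f and b ≤ f. Let ℓ be a list of booleans of length n - b, and suppose there exists ℓ' ∈ Netwk(ℓ) such that the majority count in ℓ' exceeds (n + 3f)/2, i.e., 2 * (count of the majority value B in ℓ') > n + 3*f. Then 2 * (count of B in ℓ) > n + f. -/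
/-- majority value of a list of booleans: true iff count of true ≥ count of false -/
def majList (ℓ : List Bool) : Bool := decide (ℓ.count false ≤ ℓ.count true)

theorem bosco_decision_implies_univalence (n f b : ℕ) (B : Bool) (ℓ : List Bool)
    (hn : n > 3 * f) (hb : b ≤ f) (hlen : ℓ.length = n - b)
    (hdec : ∃ ℓ', Netwk n f b ℓ ℓ' ∧ B = majList ℓ' ∧ 2 * ℓ'.count B > n + 3 * f) :
    2 * ℓ.count B > n + f := by
  obtain ⟨ℓ', ⟨a, ha, p, hperm, hpre, _⟩, _, hcnt⟩ := hdec
  have h1 : ℓ'.count B ≤ p.count B := hpre.sublist.count_le B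
  have h2 : p.count B = ℓ.count B + a.count B := by
    rw [← hperm.count_eq, List.count_append]
  have h3 : a.count B ≤ f := le_trans (a.count_le_length) (le_trans ha hb)
  omega
end

section
/- (SeqPaxos max-round lemma) Let ℓ be a nonempty list of pairs (Option V × ℕ) such that there exists an element w = (some D, r) in ℓ, r ≥ 1, all elements have second component ≤ r, and any element with second component equal to r is equal to w. Then foldl fmaxr (none, 0) ℓ = (some D, r). -/
def fmaxr {V : Type*} : (Option V × ℕ) → (Option V × ℕ) → (Option V × ℕ) :=
  fun x y => if x.2 < y.2 then y else x

lemma fmaxr_aux {V : Type*} (ℓ : List (Option V × ℕ)) (D : V) (r : ℕ)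
    (acc : Option V × ℕ) (hacc : acc.2 ≤ r)
    (hin : acc = (some D, r) ∨ (some D, r) ∈ ℓ)
    (haccr : acc.2 = r → acc = (some D, r))
    (hle : ∀ x ∈ ℓ, x.2 ≤ r)
    (heq : ∀ x ∈ ℓ, x.2 = r → x = (some D, r)) :
    ℓ.foldl fmaxr acc = (some D, r) := by
  induction ℓ generalizing acc with
  | nil =>
    rcases hin with h | h
    · simpa using h
    · simp at h
  | cons a t ih =>
    simp only [List.foldl_cons]
    have ha2 : a.2 ≤ r := hle a (by simp)
    have hb : fmaxr acc a = a ∨ fmaxr acc a = acc := by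
      unfold fmaxr; split <;> simp
    apply ih
    · rcases hb with h | h <;> rw [h] <;> assumption
    · rcases hin with h | h
      · left; subst h; unfold fmaxr
        simp [Nat.not_lt.mpr ha2]
      · rcases (List.mem_cons.mp h) with h | h
        · subst h
          left
          unfold fmaxr
          split
          · rfl
          · exact haccr (le_antisymm hacc (by omega))
        · right; exact h
    · intro h2
      rcases hb with h | h <;> rw [h] at h2 ⊢
      · exact heq a (by simp) h2
      · exact haccr h2
    · intro x hx; exact hle x (by simp [hx])
    · intro x hx; exact heq x (by simp [hx])

theorem seqpaxos_max_round {V : Type*} (ℓ : List (Option V × ℕ)) (D : V) (r : ℕ)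
    (hne : ℓ ≠ []) (hmem : (some D, r) ∈ ℓ) (hr : 1 ≤ r)
    (hle : ∀ x ∈ ℓ, x.2 ≤ r)
    (heq : ∀ x ∈ ℓ, x.2 = r → x = (some D, r)) :
    ℓ.foldl fmaxr (none, 0) = (some D, r) := by
  exact fmaxr_aux ℓ D r (none, 0) (by omega) (Or.inr hmem) (by simp; omega) hle heq
end

section
/- (SeqPaxos univalence) Suppose n > 2f. Let x⃗ be a list of pairs (Option V × ℕ) of length n, such that (1) at least f+1 elements equal (some D, r), (2) every element has second component ≤ r with r ≥ 1, and (3) any two elements with equal second components are equal. Then for any ℓ ∈ NetwkCrash(x⃗) (permute x⃗ and take a prefix of length ≥ n - f), the first component of foldl fmaxr (none, 0) ℓ equals some D. -/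
/-- crash-fault network: permute and take a prefix of length at least `n - f` -/
def NetwkCrash {τ : Type*} (n f : ℕ) (ℓ ℓ' : List τ) : Prop :=
  ∃ p : List τ, ℓ.Perm p ∧ ℓ' <+: p ∧ n - f ≤ ℓ'.length

lemma count_inst_eq {α : Type*} [BEq α] [LawfulBEq α] [DecidableEq α]
    (l : List α) (a : α) :
    l.count a = @List.count α instBEqOfDecidableEq a l := by
  induction l with
  | nil => rfl
  | cons b t ih => simp [List.count_cons, ih, beq_iff_eq]

lemma fmaxr_fold_mem {V : Type*} : ∀ (ℓ : List (Option V × ℕ)) (a),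
    ℓ.foldl fmaxr a = a ∨ ℓ.foldl fmaxr a ∈ ℓ := by
  intro ℓ
  induction ℓ with
  | nil => intro a; exact Or.inl rfl
  | cons b t ih =>
    intro a
    simp only [List.foldl_cons]
    rcases ih (fmaxr a b) with h | h
    · rw [h]
      unfold fmaxr
      split
      · exact Or.inr List.mem_cons_self
      · exact Or.inl rfl
    · exact Or.inr (List.mem_cons_of_mem _ h)

lemma fmaxr_fold_ge {V : Type*} : ∀ (ℓ : List (Option V × ℕ)) (a),
    a.2 ≤ (ℓ.foldl fmaxr a).2 ∧ ∀ w ∈ ℓ, w.2 ≤ (ℓ.foldl fmaxr a).2 := by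
  intro ℓ
  induction ℓ with
  | nil => intro a; exact ⟨le_refl _, by simp⟩
  | cons b t ih =>
    intro a
    simp only [List.foldl_cons]
    obtain ⟨h1, h2⟩ := ih (fmaxr a b)
    have hab : a.2 ≤ (fmaxr a b).2 ∧ b.2 ≤ (fmaxr a b).2 := by
      unfold fmaxr; split <;> omega
    refine ⟨le_trans hab.1 h1, ?_⟩
    intro w hw
    rcases List.mem_cons.mp hw with rfl | hw
    · exact le_trans hab.2 h1
    · exact h2 w hw

theorem seqpaxos_univalence {V : Type*} [DecidableEq V] (n f : ℕ) (D : V) (r : ℕ)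
    (x : List (Option V × ℕ)) (hn : n > 2 * f) (hlen : x.length = n)
    (hcnt : f + 1 ≤ x.count (some D, r))
    (hle : ∀ w ∈ x, w.2 ≤ r) (hr : 1 ≤ r)
    (huniq : ∀ w ∈ x, ∀ w' ∈ x, w.2 = w'.2 → w = w') :
    ∀ ℓ, NetwkCrash n f x ℓ → (ℓ.foldl fmaxr (none, 0)).1 = some D := by
  rintro ℓ ⟨p, hperm, ⟨t, rfl⟩, hlen'⟩
  have hsub : ∀ w ∈ ℓ, w ∈ x := fun w hw =>
    hperm.mem_iff.mpr (List.mem_append_left t hw)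
  have hplen : ℓ.length + t.length = n := by
    rw [← hlen, hperm.length_eq, List.length_append]
  have hcntp : x.count (some D, r) = ℓ.count (some D, r) + t.count (some D, r) := by
    unfold List.count
    rw [hperm.countP_eq, List.countP_append]
  have htle : t.count (some D, r) ≤ t.length := List.count_le_length
  have hmem : (some D, r) ∈ ℓ := by
    rw [← List.count_pos_iff]
    omega
  have hDx : (some D, r) ∈ x := hsub _ hmem
  obtain ⟨h1, h2⟩ := fmaxr_fold_ge ℓ ((none : Option V), 0)
  have hge : r ≤ (ℓ.foldl fmaxr (none, 0)).2 := h2 _ hmem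
  rcases fmaxr_fold_mem ℓ ((none : Option V), 0) with h | h
  · rw [h] at hge; omega
  · have hlex : (ℓ.foldl fmaxr (none, 0)).2 ≤ r := hle _ (hsub _ h)
    have : ℓ.foldl fmaxr (none, 0) = (some D, r) :=
      huniq _ (hsub _ h) _ hDx (le_antisymm hlex hge)
    rw [this]
end

section
/- (SeqPaxos update preservation through the network) Let x⃗ and y⃗ be lists of the same length n such that for each index u, y⃗[u] = w or y⃗[u] = x⃗[u], for a fixed value w. Then for every ℓ ∈ NetwkCrash(y⃗) (permute and truncate to length ≥ n - f), either w is an element of ℓ, or ℓ ∈ NetwkCrash(x⃗). -/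
theorem seqpaxos_update_preservation {τ : Type*} (n f : ℕ) (w : τ) (x y : List τ)
    (hx : x.length = n) (hy : y.length = n)
    (hupd : List.Forall₂ (fun a b => b = w ∨ b = a) x y) :
    ∀ ℓ, NetwkCrash n f y ℓ → w ∈ ℓ ∨ NetwkCrash n f x ℓ := by
  classical
  intro ℓ hnet
  by_cases hw : w ∈ ℓ
  · exact Or.inl hw
  · right
    obtain ⟨p, hperm, hpre, hlen⟩ := hnet
    have hcount : ∀ a : τ, a ≠ w →
        Multiset.count a (↑y : Multiset τ) ≤ Multiset.count a (↑x : Multiset τ) := by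
      intro a ha
      clear hx hy hperm hpre hlen hw
      induction hupd with
      | nil => simp
      | cons h hrest ih =>
        rename_i xh yh xt yt
        rw [show ((yh :: yt : List τ) : Multiset τ) = yh ::ₘ ↑yt from rfl,
            show ((xh :: xt : List τ) : Multiset τ) = xh ::ₘ ↑xt from rfl,
            Multiset.count_cons, Multiset.count_cons]
        rcases h with rfl | rfl
        · rw [if_neg ha]
          omega
        · omega
    have hly : (↑ℓ : Multiset τ) ≤ (↑y : Multiset τ) := by
      have h1 : (↑ℓ : Multiset τ) ≤ (↑p : Multiset τ) :=
        (hpre.sublist).subperm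
      have h2 : (↑p : Multiset τ) = (↑y : Multiset τ) :=
        Multiset.coe_eq_coe.mpr hperm.symm
      rw [h2] at h1
      exact h1
    have hlx : (↑ℓ : Multiset τ) ≤ (↑x : Multiset τ) := by
      rw [Multiset.le_iff_count]
      intro a
      by_cases ha : a = w
      · subst ha
        have : Multiset.count a (↑ℓ : Multiset τ) = 0 := by
          rw [Multiset.count_eq_zero]
          simpa using hw
        omega
      · calc Multiset.count a (↑ℓ : Multiset τ)
            ≤ Multiset.count a (↑y : Multiset τ) := Multiset.le_iff_count.mp hly a
          _ ≤ Multiset.count a (↑x : Multiset τ) := hcount a ha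
    set m : Multiset τ := (↑x : Multiset τ) - (↑ℓ : Multiset τ) with hm
    have hsum : (↑ℓ : Multiset τ) + m = (↑x : Multiset τ) := add_tsub_cancel_of_le hlx
    refine ⟨ℓ ++ m.toList, ?_, List.prefix_append ℓ m.toList, hlen⟩
    rw [← Multiset.coe_eq_coe, ← hsum]
    show _ = (↑ℓ + ↑(m.toList) : Multiset τ)
    rw [Multiset.coe_toList]
end

section
/- (Composition) Let T₁ and T₂ be labeled transition systems and T = T₁ ⋈_Λ T₂ their interaction composition over permitted label pairs Λ. Suppose s₁ →[L₁] t₁ in T₁, s₂ →[L₂] t₂ in T₂, and L is a sequence of labels in Λ whose projection to the i-th component equals Lᵢ for i = 1, 2. Then (s₁, s₂) →[L] (t₁, t₂) in T. -/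
inductive Steps {S L : Type*} (step : S → L → S → Prop) : S → List L → S → Prop
  | nil (s : S) : Steps step s [] s
  | cons {s t u : S} {l : L} {L' : List L} :
      step s l t → Steps step t L' u → Steps step s (l :: L') u

def compStep {S₁ S₂ L₁ L₂ : Type*} (Λ : Set (Option L₁ × Option L₂))
    (step₁ : S₁ → L₁ → S₁ → Prop) (step₂ : S₂ → L₂ → S₂ → Prop) :
    (S₁ × S₂) → (Option L₁ × Option L₂) → (S₁ × S₂) → Prop :=
  fun s l t => l ∈ Λ ∧
    (match l.1 with | none => t.1 = s.1 | some a => step₁ s.1 a t.1) ∧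
    (match l.2 with | none => t.2 = s.2 | some a => step₂ s.2 a t.2)

theorem composition {S₁ S₂ L₁ L₂ : Type*} (Λ : Set (Option L₁ × Option L₂))
    (step₁ : S₁ → L₁ → S₁ → Prop) (step₂ : S₂ → L₂ → S₂ → Prop)
    (s₁ t₁ : S₁) (s₂ t₂ : S₂)
    (L₁' : List L₁) (L₂' : List L₂) (L : List (Option L₁ × Option L₂))
    (h₁ : Steps step₁ s₁ L₁' t₁) (h₂ : Steps step₂ s₂ L₂' t₂)
    (hΛ : ∀ l ∈ L, l ∈ Λ)
    (hp₁ : L.filterMap Prod.fst = L₁') (hp₂ : L.filterMap Prod.snd = L₂') :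
    Steps (compStep Λ step₁ step₂) (s₁, s₂) L (t₁, t₂) := by
  induction L generalizing s₁ s₂ L₁' L₂' with
  | nil =>
    simp at hp₁ hp₂
    subst hp₁; subst hp₂
    cases h₁; cases h₂
    exact Steps.nil _
  | cons l rest ih =>
    obtain ⟨a, b⟩ := l
    have hmem : (a, b) ∈ Λ := hΛ _ List.mem_cons_self
    have hrest : ∀ x ∈ rest, x ∈ Λ := fun x hx => hΛ _ (List.mem_cons_of_mem _ hx)
    cases a with
    | none =>
      cases b with
      | none =>
        simp [List.filterMap_cons] at hp₁ hp₂
        exact Steps.cons (t := (s₁, s₂)) ⟨hmem, rfl, rfl⟩ (ih _ _ _ _ h₁ h₂ hrest hp₁ hp₂)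
      | some b' =>
        simp [List.filterMap_cons] at hp₁ hp₂
        subst hp₂
        cases h₂ with
        | @cons _ m _ _ _ hstep hs =>
          exact Steps.cons (t := (s₁, m)) ⟨hmem, rfl, hstep⟩ (ih _ _ _ _ h₁ hs hrest hp₁ rfl)
    | some a' =>
      cases b with
      | none =>
        simp [List.filterMap_cons] at hp₁ hp₂
        subst hp₁
        cases h₁ with
        | @cons _ m _ _ _ hstep hs =>
          exact Steps.cons (t := (m, s₂)) ⟨hmem, hstep, rfl⟩ (ih _ _ _ _ hs h₂ hrest rfl hp₂)
      | some b' =>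
        simp [List.filterMap_cons] at hp₁ hp₂
        subst hp₁; subst hp₂
        cases h₁ with
        | @cons _ m₁ _ _ _ hstep₁ hs₁ =>
          cases h₂ with
          | @cons _ m₂ _ _ _ hstep₂ hs₂ =>
            exact Steps.cons (t := (m₁, m₂)) ⟨hmem, hstep₁, hstep₂⟩
              (ih _ _ _ _ hs₁ hs₂ hrest rfl rfl)
end

section
/- (Membership forces max) Let ℓ be a list of pairs (Option V × ℕ). If (some D, r) ∈ ℓ and every element of ℓ has second component at most r, and every element of ℓ with second component equal to r equals (some D, r), then foldl fmaxr (none, 0) ℓ has second component r and first component some D, provided r ≥ 1. -/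
lemma fmaxr_fold_aux {V : Type*} (D : V) (r : ℕ) :
    ∀ (ℓ : List (Option V × ℕ)) (acc : Option V × ℕ),
    (∀ x ∈ ℓ, x.2 ≤ r) → (∀ x ∈ ℓ, x.2 = r → x = (some D, r)) →
    acc.2 ≤ r → (acc.2 = r → acc = (some D, r)) →
    ((some D, r) ∈ ℓ ∨ acc = (some D, r)) →
    ℓ.foldl fmaxr acc = (some D, r) := by
  intro ℓ
  induction ℓ with
  | nil =>
    intro acc _ _ _ _ hd
    simpa using hd
  | cons x l ih =>
    intro acc hle heq hacc2 haccr hd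
    simp only [List.foldl_cons]
    have hx2 : x.2 ≤ r := hle x (by simp)
    have hxr : x.2 = r → x = (some D, r) := heq x (by simp)
    have hle' : ∀ y ∈ l, y.2 ≤ r := fun y hy => hle y (by simp [hy])
    have heq' : ∀ y ∈ l, y.2 = r → y = (some D, r) := fun y hy => heq y (by simp [hy])
    have h2 : (fmaxr acc x).2 ≤ r := by
      unfold fmaxr; split <;> assumption
    have hr2 : (fmaxr acc x).2 = r → fmaxr acc x = (some D, r) := by
      unfold fmaxr; split
      · exact hxr
      · exact haccr
    apply ih _ hle' heq' h2 hr2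
    rcases hd with hd | hd
    · rcases List.mem_cons.mp hd with hd | hd
      · right
        unfold fmaxr
        split
        · exact hd.symm
        · apply haccr
          have hxr2 : x.2 = r := by rw [← hd]
          omega
      · left; exact hd
    · right
      subst hd
      unfold fmaxr
      rw [if_neg (by simpa using hx2.not_gt)]

theorem membership_forces_max {V : Type*} (ℓ : List (Option V × ℕ)) (D : V) (r : ℕ)
    (hmem : (some D, r) ∈ ℓ) (hle : ∀ x ∈ ℓ, x.2 ≤ r)
    (heq : ∀ x ∈ ℓ, x.2 = r → x = (some D, r)) (hr : 1 ≤ r) :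
    (ℓ.foldl fmaxr (none, 0)).2 = r ∧ (ℓ.foldl fmaxr (none, 0)).1 = some D := by
  have := fmaxr_fold_aux D r ℓ (none, 0) hle heq (by omega)
    (by intro h; simp at h; omega) (Or.inl hmem)
  rw [this]
  simp
end
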